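/- arXiv:0704.1700 — 5 statements merged into one kernel-verified Lean document; each statement's English description precedes it below -/
import Mathlib

section
/- Let π₀ be a normal subgroup of a finite group π and let M be a π-lattice on which π₀ acts trivially. Then M is an invertible π-lattice if and only if M is an invertible π/π₀-lattice. -/
/-- A `π`-lattice is a permutation lattice if it has a `ℤ`-basis permuted by the group. -/
def IsPermLattice (G : Type*) [Group G] (M : Type*) [AddCommGroup M]
    [DistribMulAction G M] : Prop :=
  ∃ (ι : Type) (_ : Fintype ι) (b : Module.Basis ι ℤ M), ∀ (g : G) (i : ι), ∃ j, g • b i = b j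

/-- The induced action of `G ⧸ π₀` on a `G`-module on which `π₀` acts trivially. -/
def quotAction {G : Type*} [Group G] (π₀ : Subgroup G) [π₀.Normal]
    {M : Type*} [AddCommGroup M] [DistribMulAction G M]
    (htriv : ∀ h ∈ π₀, ∀ x : M, h • x = x) :
    DistribMulAction (G ⧸ π₀) M :=
  DistribMulAction.compHom M
    (QuotientGroup.lift π₀ (DistribMulAction.toAddMonoidEnd G M)
      (fun h hh => by
        ext x
        exact htriv h hh x))

/-- A `π`-lattice is invertible if it is an equivariant direct summand of a
permutation lattice (a finite free `ℤ`-module with the group permuting coordinates). -/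
def IsInvLattice (G : Type*) [Group G] (M : Type*) [AddCommGroup M]
    [DistribMulAction G M] : Prop :=
  ∃ (ι : Type) (_ : Fintype ι) (ρ : G →* Equiv.Perm ι)
    (f : M →+ (ι → ℤ)) (r : (ι → ℤ) →+ M),
    (∀ (g : G) (x : M) (i : ι), f (g • x) i = f x ((ρ g)⁻¹ i)) ∧
    (∀ (g : G) (v : ι → ℤ), r (fun i => v ((ρ g)⁻¹ i)) = g • r v) ∧
    (∀ x : M, r (f x) = x)

/-!
Let `M` be a direct summand of the permutation lattice `ℤ^ι` via `f : M → ℤ^ι` and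
`r : ℤ^ι → M`. Since `π₀` fixes `M`, the vectors `f x` are `π₀`-invariant, i.e. constant on
the `π₀`-orbits of `ι`; so `f` factors through `ℤ^(ι/π₀)`, on which `π/π₀` acts by permuting
the orbits (this uses that `π₀` is normal), and restricting `r` to orbit-constant vectors gives
the retraction. Conversely, a `π/π₀`-permutation lattice is a `π`-permutation lattice by
inflation.
-/

namespace MulAction

variable {G : Type*} [Group G] {ι : Type*} (ρ : G →* Equiv.Perm ι) (N : Subgroup G)

theorem orbitRel_map_iff {a b : ι} : orbitRel (N.map ρ) ι a b ↔ ∃ n ∈ N, ρ n b = a := by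
  simp [orbitRel_apply, mem_orbit_iff, Subgroup.smul_def]

theorem orbitRel_map_apply_self {n : G} (hn : n ∈ N) (i : ι) : orbitRel (N.map ρ) ι (ρ n i) i :=
  (orbitRel_map_iff ρ N).2 ⟨n, hn, rfl⟩

theorem apply_eq_of_orbitRel_map {M β : Type*} [SMul G M] (htriv : ∀ n ∈ N, ∀ x : M, n • x = x)
    {f : M → ι → β} (hf : ∀ (g : G) (x : M) (i : ι), f (g • x) i = f x ((ρ g)⁻¹ i))
    (x : M) {a b : ι} (hab : orbitRel (N.map ρ) ι a b) : f x a = f x b := by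
  obtain ⟨n, hn, rfl⟩ := (orbitRel_map_iff ρ N).1 hab
  simpa [htriv n hn] using hf n x (ρ n b)

variable [N.Normal]

theorem orbitRel_map_apply_apply {g : G} {a b : ι} (h : orbitRel (N.map ρ) ι a b) :
    orbitRel (N.map ρ) ι (ρ g a) (ρ g b) := by
  obtain ⟨n, hn, rfl⟩ := (orbitRel_map_iff ρ N).1 h
  refine (orbitRel_map_iff ρ N).2 ⟨g * n * g⁻¹, ‹N.Normal›.conj_mem n hn g, ?_⟩
  simp [Equiv.Perm.mul_apply]

theorem orbitRel_map_apply_apply_iff (g : G) {a b : ι} :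
    orbitRel (N.map ρ) ι (ρ g a) (ρ g b) ↔ orbitRel (N.map ρ) ι a b :=
  ⟨fun h => by simpa [← Equiv.Perm.mul_apply, ← map_mul] using
    orbitRel_map_apply_apply ρ N (g := g⁻¹) h, orbitRel_map_apply_apply ρ N⟩

def orbitPermHom : G →* Equiv.Perm (orbitRel.Quotient (N.map ρ) ι) where
  toFun g := Quotient.congr (ρ g) fun _ _ => (orbitRel_map_apply_apply_iff ρ N g).symm
  map_one' := by ext ⟨i⟩; exact congrArg (Quotient.mk _) (by simp)
  map_mul' g h := by ext ⟨i⟩; exact congrArg (Quotient.mk _) (by simp [Equiv.Perm.mul_apply])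

def quotientOrbitPermHom : G ⧸ N →* Equiv.Perm (orbitRel.Quotient (N.map ρ) ι) :=
  QuotientGroup.lift N (orbitPermHom ρ N) fun n hn => by
    ext ⟨i⟩
    exact Quotient.sound (orbitRel_map_apply_self ρ N hn i)

theorem quotientOrbitPermHom_mk (g : G) (i : ι) :
    quotientOrbitPermHom ρ N g (Quotient.mk _ i) = Quotient.mk _ (ρ g i) := rfl

theorem quotientOrbitPermHom_inv_mk (g : G) (i : ι) :
    (quotientOrbitPermHom ρ N g)⁻¹ (Quotient.mk _ i) = Quotient.mk _ ((ρ g)⁻¹ i) := by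
  rw [← map_inv, ← QuotientGroup.mk_inv, quotientOrbitPermHom_mk, map_inv]

end MulAction

namespace IsInvLattice

open MulAction

variable {G : Type*} [Group G] {M : Type*} [AddCommGroup M] [DistribMulAction G M]

theorem compHom {H : Type*} [Group H] [DistribMulAction H M] (φ : G →* H)
    (hact : ∀ (g : G) (x : M), φ g • x = g • x) (hM : IsInvLattice H M) : IsInvLattice G M := by
  obtain ⟨ι, hι, ρ, f, r, hf, hr, hrf⟩ := hM
  exact ⟨ι, hι, ρ.comp φ, f, r, fun g x i => hact g x ▸ hf (φ g) x i,
    fun g v => hact g _ ▸ hr (φ g) v, hrf⟩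

theorem quotient (N : Subgroup G) [N.Normal] [DistribMulAction (G ⧸ N) M]
    (hact : ∀ (g : G) (x : M), (g : G ⧸ N) • x = g • x) (hM : IsInvLattice G M) :
    IsInvLattice (G ⧸ N) M := by
  obtain ⟨ι, _, ρ, f, r, hf, hr, hrf⟩ := hM
  have htriv : ∀ n ∈ N, ∀ x : M, n • x = x := fun n hn x => by
    rw [← hact, (QuotientGroup.eq_one_iff n).2 hn, one_smul]
  let Q := orbitRel.Quotient (N.map ρ) ι
  let f' : M →+ (Q → ℤ) :=
    { toFun x := Quotient.lift (f x) fun _ _ => apply_eq_of_orbitRel_map ρ N htriv hf x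
      map_zero' := by ext ⟨i⟩; exact congrFun f.map_zero i
      map_add' x y := by ext ⟨i⟩; exact congrFun (f.map_add x y) i }
  let r' : (Q → ℤ) →+ M := r.comp (LinearMap.funLeft ℤ ℤ (Quotient.mk _)).toAddMonoidHom
  refine ⟨Q, Fintype.ofFinite Q, quotientOrbitPermHom ρ N, f', r', ?_, ?_, hrf⟩
  · intro g x q
    induction g using QuotientGroup.induction_on with | H g => ?_
    induction q using Quotient.inductionOn with | h i => ?_
    change f' ((g : G ⧸ N) • x) (Quotient.mk _ i) =
      f' x ((quotientOrbitPermHom ρ N g)⁻¹ (Quotient.mk _ i))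
    rw [quotientOrbitPermHom_inv_mk, hact]
    exact hf g x i
  · intro g v
    induction g using QuotientGroup.induction_on with | H g => ?_
    change r (fun i => v ((quotientOrbitPermHom ρ N g)⁻¹ (Quotient.mk _ i))) = (g : G ⧸ N) • r' v
    simp_rw [quotientOrbitPermHom_inv_mk, hact]
    exact hr g fun i => v (Quotient.mk _ i)

end IsInvLattice

theorem isInvLattice_iff_quotient_general (G : Type*) [Group G] (π₀ : Subgroup G) [π₀.Normal]
    (M : Type*) [AddCommGroup M] [DistribMulAction G M]
    (htriv : ∀ h ∈ π₀, ∀ x : M, h • x = x) :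
    IsInvLattice G M ↔
      (letI := quotAction π₀ htriv; IsInvLattice (G ⧸ π₀) M) := by
  let _ := quotAction π₀ htriv
  have hact : ∀ (g : G) (x : M), (g : G ⧸ π₀) • x = g • x := fun _ _ => rfl
  exact ⟨IsInvLattice.quotient π₀ hact, IsInvLattice.compHom (QuotientGroup.mk' π₀) hact⟩

/-- If `π₀ ⊴ π` acts trivially on the `π`-lattice `M`, then `M` is an invertible
`π`-lattice if and only if it is an invertible `π/π₀`-lattice. -/
theorem isInvLattice_iff_quotient (G : Type*) [Group G] (π₀ : Subgroup G) [π₀.Normal]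
    (M : Type*) [AddCommGroup M] [DistribMulAction G M]
    [Module.Finite ℤ M] [Module.Free ℤ M]
    (htriv : ∀ h ∈ π₀, ∀ x : M, h • x = x) :
    IsInvLattice G M ↔
      (letI := quotAction π₀ htriv; IsInvLattice (G ⧸ π₀) M) :=
  isInvLattice_iff_quotient_general G π₀ M htriv
end

section
/- Let π be a finite group and E an invertible π-lattice. If π₀ is a normal subgroup of π, then E^{π₀} is an invertible π/π₀-lattice. -/
/-- The subgroup of `π₀`-fixed points of a `G`-module. -/
def fixedSub (G : Type*) [Group G] (π₀ : Subgroup G) (P : Type*) [AddCommGroup P]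
    [DistribMulAction G P] : AddSubgroup P where
  carrier := {x | ∀ h ∈ π₀, h • x = x}
  add_mem' := by
    intro a b ha hb h hh
    rw [smul_add, ha h hh, hb h hh]
  zero_mem' := by intro h hh; simp
  neg_mem' := by
    intro a ha h hh
    rw [smul_neg, ha h hh]

theorem smul_mem_fixedSub {G : Type*} [Group G] {π₀ : Subgroup G} [π₀.Normal]
    {P : Type*} [AddCommGroup P] [DistribMulAction G P] (g : G) {x : P}
    (hx : x ∈ fixedSub G π₀ P) : g • x ∈ fixedSub G π₀ P := by
  intro h hh
  have h1 : g⁻¹ * h * g⁻¹⁻¹ ∈ π₀ := Subgroup.Normal.conj_mem ‹π₀.Normal› h hh g⁻¹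
  have h2 : (g⁻¹ * h * g) • x = x := by
    have := hx _ h1
    simpa using this
  calc h • g • x = (h * g) • x := (mul_smul h g x).symm
    _ = (g * (g⁻¹ * h * g)) • x := by group
    _ = g • ((g⁻¹ * h * g) • x) := mul_smul _ _ x
    _ = g • x := by rw [h2]

/-! If `E` is a `π`-equivariant retract of `ℤ^ι` with `π` permuting `ι`, then taking
`π₀`-fixed points exhibits `E^{π₀}` as a retract of `(ℤ^ι)^{π₀}`, the lattice of functions
constant on `π₀`-orbits, i.e. the permutation lattice `ℤ^{ι/π₀}`. Since `π₀` is normal, `π` permutes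
the `π₀`-orbits and `π₀` acts trivially on them, so everything descends to `π/π₀`. -/

section OrbitQuotient

variable {G : Type*} [Group G] (N : Subgroup G) {ι : Type*} (ρ : G →* Equiv.Perm ι)

def orbitSetoid : Setoid ι where
  r i j := ∃ h ∈ N, ρ h i = j
  iseqv := by
    refine ⟨fun i => ⟨1, one_mem _, by simp⟩, ?_, ?_⟩
    · rintro i j ⟨h, hh, rfl⟩
      exact ⟨h⁻¹, inv_mem hh, by simp⟩
    · rintro i j k ⟨h, hh, rfl⟩ ⟨h', hh', rfl⟩
      exact ⟨h' * h, mul_mem hh' hh, by simp⟩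

variable {N ρ} [N.Normal]

lemma orbitSetoid_apply (g : G) {i j : ι} (hij : orbitSetoid N ρ i j) :
    orbitSetoid N ρ (ρ g i) (ρ g j) := by
  obtain ⟨h, hh, rfl⟩ := hij
  refine ⟨g * h * g⁻¹, Subgroup.Normal.conj_mem ‹_› h hh g, ?_⟩
  simp [← Equiv.Perm.mul_apply, ← map_mul]

lemma orbitSetoid_apply_iff (g : G) (i j : ι) :
    orbitSetoid N ρ i j ↔ orbitSetoid N ρ (ρ g i) (ρ g j) := by
  refine ⟨orbitSetoid_apply g, fun h => ?_⟩
  simpa [← Equiv.Perm.mul_apply, ← map_mul] using orbitSetoid_apply g⁻¹ h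

variable (N ρ)

def orbitPerm : G →* Equiv.Perm (Quotient (orbitSetoid N ρ)) where
  toFun g := Quotient.congr (ρ g) (orbitSetoid_apply_iff g)
  map_one' := Equiv.ext fun q => Quotient.inductionOn q fun i => by simp
  map_mul' g g' := Equiv.ext fun q => Quotient.inductionOn q fun i => by simp

@[simp] lemma orbitPerm_mk (g : G) (i : ι) :
    orbitPerm N ρ g (Quotient.mk _ i) = Quotient.mk _ (ρ g i) := rfl

lemma mem_ker_orbitPerm {h : G} (hh : h ∈ N) : h ∈ (orbitPerm N ρ).ker :=
  MonoidHom.mem_ker.2 <| Equiv.ext fun q => Quotient.inductionOn q fun i =>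
    Quotient.sound ⟨h⁻¹, inv_mem hh, by simp⟩

def quotientOrbitPerm : G ⧸ N →* Equiv.Perm (Quotient (orbitSetoid N ρ)) :=
  QuotientGroup.lift N (orbitPerm N ρ) fun _ => mem_ker_orbitPerm N ρ

lemma quotientOrbitPerm_inv_mk (g : G) (i : ι) :
    (quotientOrbitPerm N ρ g)⁻¹ (Quotient.mk _ i) = Quotient.mk _ ((ρ g)⁻¹ i) := by
  rw [quotientOrbitPerm, QuotientGroup.lift_mk, ← map_inv, orbitPerm_mk, map_inv]

end OrbitQuotient

section FixedSummand

variable {G : Type*} [Group G] {N : Subgroup G} {ι : Type*} {ρ : G →* Equiv.Perm ι}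
  {E : Type*} [AddCommGroup E] [DistribMulAction G E]

lemma apply_eq_of_mem_fixedSub {f : E →+ (ι → ℤ)}
    (hf : ∀ (g : G) (x : E) (i : ι), f (g • x) i = f x ((ρ g)⁻¹ i))
    {x : E} (hx : x ∈ fixedSub G N E) {i j : ι} (hij : orbitSetoid N ρ i j) : f x i = f x j := by
  obtain ⟨h, hh, rfl⟩ := hij
  calc f x i = f (h • x) (ρ h i) := by simp [hf]
    _ = f x (ρ h i) := by rw [hx h hh]

lemma comp_mk_mem_fixedSub {r : (ι → ℤ) →+ E}
    (hr : ∀ (g : G) (v : ι → ℤ), r (fun i => v ((ρ g)⁻¹ i)) = g • r v)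
    (v : Quotient (orbitSetoid N ρ) → ℤ) : r (v ∘ Quotient.mk _) ∈ fixedSub G N E := by
  intro h hh
  rw [← hr]
  congr 1
  funext i
  exact congrArg v (Quotient.sound ⟨h, hh, by simp⟩)

variable (N ρ)

/-- `f` restricted to `N`-fixed points, read off at one representative of each `N`-orbit. -/
noncomputable def fixedToOrbits (f : E →+ (ι → ℤ)) :
    fixedSub G N E →+ (Quotient (orbitSetoid N ρ) → ℤ) :=
  (LinearMap.funLeft ℤ ℤ Quotient.out).toAddMonoidHom.comp (f.comp (fixedSub G N E).subtype)

def orbitsToFixed {r : (ι → ℤ) →+ E}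
    (hr : ∀ (g : G) (v : ι → ℤ), r (fun i => v ((ρ g)⁻¹ i)) = g • r v) :
    (Quotient (orbitSetoid N ρ) → ℤ) →+ fixedSub G N E :=
  (r.comp (LinearMap.funLeft ℤ ℤ (Quotient.mk _)).toAddMonoidHom).codRestrict _
    (comp_mk_mem_fixedSub hr)

@[simp] lemma coe_orbitsToFixed {r : (ι → ℤ) →+ E}
    (hr : ∀ (g : G) (v : ι → ℤ), r (fun i => v ((ρ g)⁻¹ i)) = g • r v)
    (v : Quotient (orbitSetoid N ρ) → ℤ) : (orbitsToFixed N ρ hr v : E) = r (v ∘ Quotient.mk _) :=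
  rfl

variable {N ρ} {f : E →+ (ι → ℤ)} {r : (ι → ℤ) →+ E}
  (hf : ∀ (g : G) (x : E) (i : ι), f (g • x) i = f x ((ρ g)⁻¹ i))
  (hr : ∀ (g : G) (v : ι → ℤ), r (fun i => v ((ρ g)⁻¹ i)) = g • r v)
include hf

lemma fixedToOrbits_mk (x : fixedSub G N E) (i : ι) :
    fixedToOrbits N ρ f x (Quotient.mk _ i) = f x i :=
  apply_eq_of_mem_fixedSub hf x.2 (Quotient.exact (Quotient.out_eq _))

lemma fixedToOrbits_smul [N.Normal] (g : G) (x : fixedSub G N E)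
    (q : Quotient (orbitSetoid N ρ)) :
    fixedToOrbits N ρ f ⟨g • (x : E), smul_mem_fixedSub g x.2⟩ q =
      fixedToOrbits N ρ f x ((quotientOrbitPerm N ρ g)⁻¹ q) := by
  induction q using Quotient.inductionOn with
  | h i =>
    rw [quotientOrbitPerm_inv_mk, fixedToOrbits_mk hf, fixedToOrbits_mk hf]
    exact hf g x i

lemma orbitsToFixed_fixedToOrbits (hrf : ∀ x : E, r (f x) = x) (x : fixedSub G N E) :
    orbitsToFixed N ρ hr (fixedToOrbits N ρ f x) = x := by
  ext
  rw [coe_orbitsToFixed]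
  conv_rhs => rw [← hrf x]
  exact congrArg r (funext (fixedToOrbits_mk hf x))

omit hf

lemma orbitsToFixed_perm [N.Normal] (g : G) (v : Quotient (orbitSetoid N ρ) → ℤ) :
    orbitsToFixed N ρ hr (fun q => v ((quotientOrbitPerm N ρ g)⁻¹ q)) =
      ⟨g • (orbitsToFixed N ρ hr v : E), smul_mem_fixedSub g (orbitsToFixed N ρ hr v).2⟩ := by
  ext
  simp only [coe_orbitsToFixed]
  rw [← hr]
  exact congrArg r (funext fun i => congrArg v (quotientOrbitPerm_inv_mk N ρ g i))

end FixedSummand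

theorem fixedSub_isInvLattice_general (G : Type*) [Group G] (π₀ : Subgroup G) [π₀.Normal]
    (E : Type*) [AddCommGroup E] [DistribMulAction G E]
    (hE : IsInvLattice G E) :
    ∃ (ι : Type) (_ : Fintype ι) (ρ : G ⧸ π₀ →* Equiv.Perm ι)
      (f : fixedSub G π₀ E →+ (ι → ℤ)) (r : (ι → ℤ) →+ fixedSub G π₀ E),
      (∀ (g : G) (x : fixedSub G π₀ E) (i : ι),
        f ⟨g • (x : E), smul_mem_fixedSub g x.2⟩ i = f x ((ρ (g : G ⧸ π₀))⁻¹ i)) ∧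
      (∀ (g : G) (v : ι → ℤ),
        r (fun i => v ((ρ (g : G ⧸ π₀))⁻¹ i)) =
          ⟨g • ((r v : fixedSub G π₀ E) : E), smul_mem_fixedSub g (r v).2⟩) ∧
      (∀ x, r (f x) = x) := by
  obtain ⟨ι, _, ρ, f, r, hf, hr, hrf⟩ := hE
  exact ⟨Quotient (orbitSetoid π₀ ρ), Fintype.ofFinite _, quotientOrbitPerm π₀ ρ,
    fixedToOrbits π₀ ρ f, orbitsToFixed π₀ ρ hr, fixedToOrbits_smul hf,
    orbitsToFixed_perm hr, orbitsToFixed_fixedToOrbits hf hr hrf⟩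

/-- If `E` is an invertible `π`-lattice and `π₀ ⊴ π`, then the fixed submodule
`E^{π₀}` is an invertible `π/π₀`-lattice: an equivariant direct summand of a
finite free `ℤ`-module on which `π/π₀` acts by permuting coordinates. -/
theorem fixedSub_isInvLattice (G : Type*) [Group G] (π₀ : Subgroup G) [π₀.Normal]
    (E : Type*) [AddCommGroup E] [DistribMulAction G E]
    [Module.Finite ℤ E] [Module.Free ℤ E]
    (hE : IsInvLattice G E) :
    ∃ (ι : Type) (_ : Fintype ι) (ρ : G ⧸ π₀ →* Equiv.Perm ι)
      (f : fixedSub G π₀ E →+ (ι → ℤ)) (r : (ι → ℤ) →+ fixedSub G π₀ E),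
      (∀ (g : G) (x : fixedSub G π₀ E) (i : ι),
        f ⟨g • (x : E), smul_mem_fixedSub g x.2⟩ i = f x ((ρ (g : G ⧸ π₀))⁻¹ i)) ∧
      (∀ (g : G) (v : ι → ℤ),
        r (fun i => v ((ρ (g : G ⧸ π₀))⁻¹ i)) =
          ⟨g • ((r v : fixedSub G π₀ E) : E), smul_mem_fixedSub g (r v).2⟩) ∧
      (∀ x, r (f x) = x) :=
  fixedSub_isInvLattice_general G π₀ E hE
end

section
/- Let π be a finite group acting on a field L by automorphisms, let M₁ ⊆ M₂ be π-lattices with quotient N = M₂/M₁, and extend the π-action multiplicatively to the group L(M₁)^× · M₂ inside the multiplicative group of L(M₂). If H^1(π', L(M₁)^×) = 0 for all subgroups π' ≤ π and N is an invertible π-lattice, then the exact sequence 0 → L(M₁)^× → L(M₁)^× · M₂ → N → 0 of π-modules splits. -/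
open MulAction

section FixedLift

variable {H A B C : Type*} [Group H] [CommGroup A] [CommGroup B] [CommGroup C]
  [MulDistribMulAction H A] [MulDistribMulAction H B]

theorem exists_smul_eq_self_of_map_smul_eq (i : A →* B) (q : B →* C)
    (hi : Function.Injective i) (hieq : ∀ (h : H) (a : A), i (h • a) = h • i a)
    (hexact : q.ker = i.range)
    (hH1 : ∀ f : H → A, (∀ g h : H, f (g * h) = g • f h * f g) →
      ∃ a : A, ∀ g : H, f g = g • a * a⁻¹)
    (b₀ : B) (hb₀ : ∀ h : H, q (h • b₀) = q b₀) :
    ∃ b : B, q b = q b₀ ∧ ∀ h : H, h • b = b := by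
  have hmem : ∀ h : H, h • b₀ * b₀⁻¹ ∈ i.range := fun h => by
    rw [← hexact, MonoidHom.mem_ker, map_mul, map_inv, hb₀, mul_inv_cancel]
  choose f hf using hmem
  have hcocycle : ∀ g h : H, f (g * h) = g • f h * f g := fun g h => hi <| by
    rw [map_mul, hieq, hf, hf, hf, smul_mul', smul_inv', mul_smul]
    group
  obtain ⟨a, ha⟩ := hH1 f hcocycle
  have hia : q (i a) = 1 := (hexact ▸ ⟨a, rfl⟩ : i a ∈ q.ker)
  refine ⟨b₀ * (i a)⁻¹, by rw [map_mul, map_inv, hia, inv_one, mul_one], fun h => ?_⟩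
  have hsmul : h • b₀ = h • i a * (i a)⁻¹ * b₀ := by
    rw [← hieq, ← map_inv, ← map_mul, ← ha, hf]
    group
  rw [smul_mul', smul_inv', hsmul, mul_right_comm, mul_inv_cancel_comm, mul_comm]

end FixedLift

section Orbits

variable {G ι B : Type*} [Group G] [MulAction G ι] [MulAction G B]

theorem exists_equivariant_family (P : ι → B → Prop)
    (hP : ∀ (g : G) (j : ι) (b : B), P j b → P (g • j) (g • b))
    (hfix : ∀ j : ι, ∃ b : B, P j b ∧ ∀ g ∈ stabilizer G j, g • b = b) :
    ∃ b : ι → B, (∀ j, P j (b j)) ∧ ∀ (g : G) (j : ι), b (g • j) = g • b j := by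
  choose b₁ hb₁P hb₁fix using hfix
  let rep : ι → ι := fun j => (Quotient.mk (orbitRel G ι) j).out
  have hrep : ∀ j, ∃ g : G, g • rep j = j := fun j => mem_orbit_iff.mp <|
    orbitRel_apply.mp <| (orbitRel G ι).iseqv.symm (Quotient.mk_out (s := orbitRel G ι) j)
  choose t ht using hrep
  have hrep_smul : ∀ (g : G) (j : ι), rep (g • j) = rep j := fun g j =>
    congrArg Quotient.out (Quotient.sound (mem_orbit_iff.mpr ⟨g, rfl⟩))
  refine ⟨fun j => t j • b₁ (rep j), fun j => ?_, fun g j => ?_⟩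
  · simpa only [ht] using hP (t j) _ _ (hb₁P (rep j))
  have hstab : (t (g • j))⁻¹ * (g * t j) ∈ stabilizer G (rep j) := by
    rw [mem_stabilizer_iff, mul_smul, mul_smul, ht, inv_smul_eq_iff, ← hrep_smul g j, ht]
  calc t (g • j) • b₁ (rep (g • j))
      = t (g • j) • ((t (g • j))⁻¹ * (g * t j)) • b₁ (rep j) := by
        rw [hrep_smul, hb₁fix _ _ hstab]
    _ = g • t j • b₁ (rep j) := by rw [smul_smul, mul_inv_cancel_left, mul_smul]

end Orbits

section PermutationLattice

variable {ι B : Type*} [Fintype ι] [CommGroup B]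

def zpowProdHom (b : ι → B) : Multiplicative (ι → ℤ) →* B where
  toFun v := ∏ j, b j ^ v.toAdd j
  map_one' := by simp
  map_mul' v w := by simp only [toAdd_mul, Pi.add_apply, zpow_add, Finset.prod_mul_distrib]

theorem zpowProdHom_ofAdd_smul {G : Type*} [Group G] [MulAction G ι] [MulDistribMulAction G B]
    {b : ι → B} (hb : ∀ (g : G) (j : ι), b (g • j) = g • b j) (g : G) (v : ι → ℤ) :
    zpowProdHom b (.ofAdd fun j => v (g⁻¹ • j)) = g • zpowProdHom b (.ofAdd v) := by
  simp only [zpowProdHom, MonoidHom.coe_mk, OneHom.coe_mk, toAdd_ofAdd, Finset.smul_prod',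
    smul_zpow', ← hb]
  exact (Equiv.prod_comp (MulAction.toPerm g) _).symm.trans (by simp)

theorem map_zpowProdHom [DecidableEq ι] {N : Type*} [AddCommGroup N] {b : ι → B}
    (q : B →* Multiplicative N) (r : (ι → ℤ) →+ N)
    (hb : ∀ j, q (b j) = .ofAdd (r (Pi.single j 1))) (v : Multiplicative (ι → ℤ)) :
    q (zpowProdHom b v) = .ofAdd (r v.toAdd) := by
  conv_rhs => rw [← Finset.univ_sum_single v.toAdd]
  simp only [zpowProdHom, MonoidHom.coe_mk, OneHom.coe_mk, map_prod, map_zpow, hb, map_sum,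
    ofAdd_sum]
  refine Finset.prod_congr rfl fun j _ => ?_
  rw [← ofAdd_zsmul, ← map_zsmul, ← Pi.single_smul', smul_eq_mul, mul_one]

end PermutationLattice

/-- The situation of the paper is `A = L(M₁)ˣ`, `B = L(M₁)ˣ · M₂ ⊆ L(M₂)ˣ` and `N = M₂ / M₁`;
`hH1` is the vanishing of `H¹(π', A)` for all subgroups `π' ≤ π`. -/
theorem splitting_of_h1_trivial_of_invertible_general
    (G : Type*) [Group G] (A B : Type*) [CommGroup A] [CommGroup B]
    [MulDistribMulAction G A] [MulDistribMulAction G B]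
    (N : Type*) [AddCommGroup N] [DistribMulAction G N]
    (i : A →* B) (q : B →* Multiplicative N)
    (hi : Function.Injective i)
    (hieq : ∀ (g : G) (a : A), i (g • a) = g • i a)
    (hq : Function.Surjective q)
    (hqeq : ∀ (g : G) (b : B), (q (g • b)).toAdd = g • (q b).toAdd)
    (hexact : MonoidHom.ker q = MonoidHom.range i)
    (hH1 : ∀ (H : Subgroup G) (f : H → A),
      (∀ g h : H, f (g * h) = (g : G) • f h * f g) →
      ∃ a : A, ∀ g : H, f g = (g : G) • a * a⁻¹)
    (hN : IsInvLattice G N) :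
    ∃ s : Multiplicative N →* B,
      (∀ (g : G) (n : N), s (Multiplicative.ofAdd (g • n)) = g • s (Multiplicative.ofAdd n)) ∧
      ∀ n : Multiplicative N, q (s n) = n := by
  classical
  obtain ⟨ι, _, ρ, f, r, hf, hr, hrf⟩ := hN
  let _ : MulAction G ι := MulAction.compHom ι ρ
  have hr_single (g : G) (j : ι) : r (Pi.single (g • j) 1) = g • r (Pi.single j 1) := by
    rw [← hr]
    exact congrArg r (Pi.single_comp_equiv (ρ g)⁻¹ j 1).symm
  have hq_single (g : G) (j : ι) (b : B) (hb : q b = .ofAdd (r (Pi.single j 1))) :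
      q (g • b) = .ofAdd (r (Pi.single (g • j) 1)) := by
    rw [← ofAdd_toAdd (q (g • b)), hqeq, hb, toAdd_ofAdd, hr_single]
  obtain ⟨b, hbq, hbeq⟩ := exists_equivariant_family
    (fun j b => q b = .ofAdd (r (Pi.single j 1))) hq_single fun j => by
      obtain ⟨b₀, hb₀⟩ := hq (.ofAdd (r (Pi.single j 1)))
      obtain ⟨b, hbq, hbfix⟩ := exists_smul_eq_self_of_map_smul_eq (H := stabilizer G j)
        i q hi (fun h a => hieq h a) hexact (hH1 _) b₀ fun h => by
          rw [Subgroup.smul_def, hq_single h j b₀ hb₀, h.2, hb₀]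
      exact ⟨b, hbq.trans hb₀, fun g hg => hbfix ⟨g, hg⟩⟩
  refine ⟨(zpowProdHom b).comp (AddMonoidHom.toMultiplicative f), fun g n => ?_, fun n => ?_⟩
  · have hfg : f (g • n) = fun j => f n (g⁻¹ • j) := funext fun j => (hf g n j).trans <| by
      rw [← map_inv]
      rfl
    simp only [MonoidHom.comp_apply, AddMonoidHom.toMultiplicative_apply_apply, toAdd_ofAdd, hfg]
    exact zpowProdHom_ofAdd_smul hbeq g (f n)
  · rw [MonoidHom.comp_apply, map_zpowProdHom q r hbq]
    simp [hrf]

/-- Splitting criterion (abstracting the situation `A = L(M₁)ˣ`, `B = L(M₁)ˣ · M₂ ⊆ L(M₂)ˣ`,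
`N = M₂/M₁`): let `π` act on multiplicative abelian groups `A` and `B` and on a lattice `N`,
let `1 → A → B → N → 0` be an exact sequence of `π`-modules (with `i` the injection and `q`
the surjection onto the multiplicatively-written lattice `N`). If `H¹(π', A) = 1` for all
subgroups `π' ≤ π` (every `1`-cocycle is a coboundary, as furnished by Hilbert 90 for
`A = L(M₁)ˣ`) and `N` is an invertible `π`-lattice, then the sequence splits: `q` admits a
`π`-equivariant multiplicative section. -/
theorem splitting_of_h1_trivial_of_invertible
    (G : Type*) [Group G] (A B : Type*) [CommGroup A] [CommGroup B]
    [MulDistribMulAction G A] [MulDistribMulAction G B]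
    (N : Type*) [AddCommGroup N] [DistribMulAction G N]
    [Module.Finite ℤ N] [Module.Free ℤ N]
    (i : A →* B) (q : B →* Multiplicative N)
    (hi : Function.Injective i)
    (hieq : ∀ (g : G) (a : A), i (g • a) = g • i a)
    (hq : Function.Surjective q)
    (hqeq : ∀ (g : G) (b : B), (q (g • b)).toAdd = g • (q b).toAdd)
    (hexact : MonoidHom.ker q = MonoidHom.range i)
    (hH1 : ∀ (H : Subgroup G) (f : H → A),
      (∀ g h : H, f (g * h) = (g : G) • f h * f g) →
      ∃ a : A, ∀ g : H, f g = (g : G) • a * a⁻¹)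
    (hN : IsInvLattice G N) :
    ∃ s : Multiplicative N →* B,
      (∀ (g : G) (n : N), s (Multiplicative.ofAdd (g • n)) = g • s (Multiplicative.ofAdd n)) ∧
      ∀ n : Multiplicative N, q (s n) = n :=
  splitting_of_h1_trivial_of_invertible_general G A B N i q hi hieq hq hqeq hexact hH1 hN
end

section
/- Let π = ⟨ρ⟩ be a cyclic group of order 2p with p an odd prime, write σ = ρ² and τ = ρ^p. Let M be the free abelian group on u₁,...,u_{p-1}, w₁,...,w_{p-1} with π-action determined by: σ sends uᵢ ↦ u_{i+1} for i < p-1, u_{p-1} ↦ -(u₁+...+u_{p-1}), similarly on the wᵢ; τ sends wᵢ ↦ wᵢ and uᵢ ↦ -uᵢ + wᵢ - w_{i-1} (where w₀ := -(w₁+...+w_{p-1})). Then M is isomorphic as ℤ[π]-module to ℤ[π]/⟨Φ_p(ρ)Φ_{2p}(ρ)⟩, equivalently to ℤ[⟨τ⟩] ⊗_ℤ ℤ[⟨σ⟩]/Φ_p(σ). -/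
/-!
Write `σ = ρ²`, `τ = ρᵖ` and `N = 1 + σ + ⋯ + σ^(p-1)`. Since `Φ_p(ρ) Φ_{2p}(ρ) = Φ_p(ρ²) = N`,
the target is `ℤ[π] ⧸ (N)`. On `M` the element `N` acts as zero, and `m = u₁ + w₀` generates `M`:
`(σ - τ) m = (1 + σ) u₁` and `(1 + τ) m = (1 + σ) w₀`, while `1 + σ` is invertible modulo `N`
because `p` is odd (with inverse `T = 1 + σ² + ⋯ + σ^(p-1)`). The inverse isomorphism is defined
on the `ℤ`-basis by `uᵢ ↦ σ^(i-1) (σ - τ) T` and `wᵢ ↦ σ^i (1 + τ) T`; it sends `m` to `1`, and it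
is `ℤ[π]`-linear because it commutes with `σ` and `τ`, which generate `ℤ[π]` as a ring.
-/

open Polynomial

/-- The cyclic group of order `2p`, written multiplicatively. -/
abbrev cyc2p (p : ℕ) := Multiplicative (ZMod (2 * p))

/-- The generator `ρ` of the cyclic group of order `2p`. -/
def rho (p : ℕ) : cyc2p p := Multiplicative.ofAdd (1 : ZMod (2 * p))

/-- The group ring `ℤ[π]` for `π` cyclic of order `2p`. -/
abbrev grpRing (p : ℕ) := MonoidAlgebra ℤ (cyc2p p)

/-- `ρ` viewed inside the group ring. -/
noncomputable def rhoE (p : ℕ) : grpRing p := MonoidAlgebra.of ℤ (cyc2p p) (rho p)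

open Finset

theorem geom_sum_two_mul {R : Type*} [CommSemiring R] (x : R) (k : ℕ) :
    ∑ i ∈ range (2 * k), x ^ i = (1 + x) * ∑ j ∈ range k, (x ^ 2) ^ j := by
  induction k with
  | zero => simp
  | succ k ih =>
    rw [show 2 * (k + 1) = 2 * k + 1 + 1 by ring, sum_range_succ, sum_range_succ, ih,
      sum_range_succ]
    ring

theorem sum_fin_pow_smul_eq_neg {R M : Type*} [Ring R] [AddCommGroup M] [Module R M] {n : ℕ}
    {σ : R} {c : M} (hc : (∑ k ∈ range (n + 1), σ ^ k) • c = 0) :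
    ∑ j : Fin n, σ ^ (j : ℕ) • c = -(σ ^ n • c) := by
  rw [Fin.sum_univ_eq_sum_range (fun j => σ ^ j • c), ← sum_smul]
  rw [sum_range_succ, add_smul] at hc
  exact eq_neg_of_add_eq_zero_left hc

namespace AddMonoidHom

variable {R M Q : Type*} [Ring R] [AddCommGroup M] [AddCommGroup Q] [Module R M] [Module R Q]

def smulCommSubring (ψ : M →+ Q) : Subring R where
  carrier := {r | ∀ x, ψ (r • x) = r • ψ x}
  one_mem' x := by rw [one_smul, one_smul]
  mul_mem' {r s} hr hs x := by rw [mul_smul, mul_smul, hr (s • x), hs x]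
  zero_mem' x := by rw [zero_smul, zero_smul, map_zero]
  add_mem' {r s} hr hs x := by rw [add_smul, add_smul, map_add, hr x, hs x]
  neg_mem' {r} hr x := by rw [neg_smul, neg_smul, map_neg, hr x]

theorem mem_smulCommSubring {ψ : M →+ Q} {r : R} :
    r ∈ ψ.smulCommSubring ↔ ∀ x, ψ (r • x) = r • ψ x :=
  Iff.rfl

theorem mem_smulCommSubring_of_basis {ι : Type*} (b : Module.Basis ι ℤ M) {ψ : M →+ Q} {r : R}
    (h : ∀ i, ψ (r • b i) = r • ψ (b i)) : r ∈ ψ.smulCommSubring := by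
  have := b.ext (f₁ := ψ.toIntLinearMap ∘ₗ DistribSMul.toLinearMap ℤ M r)
    (f₂ := DistribSMul.toLinearMap ℤ Q r ∘ₗ ψ.toIntLinearMap) h
  exact fun x => LinearMap.congr_fun this x

def toLinearMapOfClosure (ψ : M →+ Q) {s : Set R} (hs : Subring.closure s = ⊤)
    (h : s ⊆ ψ.smulCommSubring (R := R)) : M →ₗ[R] Q where
  toFun := ψ
  map_add' := ψ.map_add
  map_smul' r := by
    have : ψ.smulCommSubring = ⊤ := top_le_iff.1 (hs ▸ Subring.closure_le.2 h)
    exact ψ.mem_smulCommSubring.1 (this ▸ Subring.mem_top r)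

end AddMonoidHom

/-- `σ` acts on `v` as multiplication by `X` on `ℤ[X] ⧸ (1 + X + ⋯ + Xⁿ)` in the basis
`1, X, …, Xⁿ⁻¹`. -/
def IsCompanionShift {R M : Type*} [AddCommGroup M] [SMul R M] {n : ℕ} (σ : R)
    (v : Fin n → M) : Prop :=
  ∀ i : Fin n, σ • v i = if h : (i : ℕ) + 1 < n then v ⟨i + 1, h⟩ else -∑ j, v j

namespace IsCompanionShift

variable {R M Q : Type*} [AddCommGroup M] [AddCommGroup Q] {n : ℕ} {σ : R} {v : Fin n → M}

section Ring

variable [Ring R] [Module R M] [Module R Q]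

theorem pow_smul_zero [NeZero n] (h : IsCompanionShift σ v) (i : Fin n) :
    σ ^ (i : ℕ) • v 0 = v i := by
  obtain ⟨j, hj⟩ := i
  induction j with
  | zero => rw [pow_zero, one_smul]; rfl
  | succ j ih => rw [pow_succ', mul_smul, ih (by omega), h, dif_pos hj]

theorem smul_sum [NeZero n] (h : IsCompanionShift σ v) : σ • ∑ j, v j = -v 0 := by
  obtain ⟨m, rfl⟩ : ∃ m, n = m + 1 := Nat.exists_eq_succ_of_ne_zero (NeZero.ne n)
  have hlast := h (Fin.last m)
  rw [dif_neg (by simp)] at hlast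
  rw [Finset.smul_sum, Fin.sum_univ_castSucc, hlast, Fin.sum_univ_succ (f := v)]
  have hshift : ∀ i : Fin m, σ • v i.castSucc = v i.succ := fun i => by
    rw [h, dif_pos (by simp)]; rfl
  simp only [hshift]
  abel

theorem geom_sum_smul (h : IsCompanionShift σ v) (i : Fin n) :
    (∑ k ∈ range (n + 1), σ ^ k) • v i = 0 := by
  have : NeZero n := ⟨i.pos.ne'⟩
  have hlast : σ ^ n • v 0 = -∑ j, v j := by
    obtain ⟨m, rfl⟩ : ∃ m, n = m + 1 := Nat.exists_eq_succ_of_ne_zero (NeZero.ne n)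
    have := h.pow_smul_zero (Fin.last m)
    rw [Fin.val_last] at this
    rw [pow_succ', mul_smul, this, h, dif_neg (by simp)]
  have hzero : (∑ k ∈ range (n + 1), σ ^ k) • v 0 = 0 := by
    rw [sum_range_succ, add_smul, hlast, sum_smul,
      ← Fin.sum_univ_eq_sum_range (fun k => σ ^ k • v 0)]
    simp only [h.pow_smul_zero, add_neg_cancel]
  rw [← h.pow_smul_zero i, smul_smul,
    ← ((Commute.sum_right _ _ _ fun k _ => Commute.self_pow σ k).pow_left i).eq, mul_smul, hzero,
    smul_zero]

theorem map_smul (h : IsCompanionShift σ v) (ψ : M →+ Q) {c : Q}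
    (hψ : ∀ i, ψ (v i) = σ ^ (i : ℕ) • c) (hc : (∑ k ∈ range (n + 1), σ ^ k) • c = 0)
    (i : Fin n) : ψ (σ • v i) = σ • ψ (v i) := by
  rw [h i, hψ i, smul_smul, ← pow_succ']
  split_ifs with hi
  · exact hψ _
  · rw [map_neg, map_sum]
    simp only [hψ]
    rw [sum_fin_pow_smul_eq_neg hc, neg_neg, show (i : ℕ) + 1 = n by omega]

end Ring

section CommRing

variable [CommRing R] [Module R M] [Module R Q] [NeZero n]

theorem smul_eq_pow_smul (h : IsCompanionShift σ v) (r : R) (i : Fin n) :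
    r • v i = σ ^ (i : ℕ) • r • v 0 := by
  rw [← h.pow_smul_zero i, smul_comm]

theorem map_smul_of_map_smul_zero (h : IsCompanionShift σ v) {ψ : M →+ Q}
    (hσ : σ ∈ ψ.smulCommSubring) {r : R} (hr : ψ (r • v 0) = r • ψ (v 0)) (i : Fin n) :
    ψ (r • v i) = r • ψ (v i) := by
  have hσi := ψ.mem_smulCommSubring.1 (pow_mem hσ i)
  rw [h.smul_eq_pow_smul r i, hσi, hr, ← h.pow_smul_zero i, hσi, smul_comm]

end CommRing

end IsCompanionShift

theorem MonoidAlgebra.closure_singleton_of_eq_top {G : Type*} [Monoid G] {g : G}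
    (hg : ∀ x, x ∈ Submonoid.powers g) : Subring.closure {MonoidAlgebra.of ℤ G g} = ⊤ := by
  refine eq_top_iff.2 fun f _ => f.induction_on ?_ ?_ ?_
  · intro x
    obtain ⟨j, rfl⟩ := hg x
    rw [map_pow]
    exact pow_mem (Subring.subset_closure (Set.mem_singleton _)) j
  · exact fun _ _ => add_mem
  · intro z f hf
    exact zsmul_mem hf z

theorem Submodule.eq_top_of_forall_basis_mem {R M ι : Type*} [Ring R] [AddCommGroup M]
    [Module R M] (b : Module.Basis ι ℤ M) {P : Submodule R M} (h : ∀ i, b i ∈ P) : P = ⊤ :=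
  eq_top_iff.2 <| (Submodule.span_eq_top_of_span_eq_top ℤ R _ b.span_eq).ge.trans <|
    Submodule.span_le.2 <| Set.range_subset_iff.2 h

theorem LinearMap.bijective_of_map_generator_eq_one {R M : Type*} [CommRing R] [AddCommGroup M]
    [Module R M] {I : Ideal R} {m : M} (hm : Submodule.span R {m} = ⊤) (hI : ∀ r ∈ I, r • m = 0)
    (ψ : M →ₗ[R] R ⧸ I) (hψ : ψ m = 1) : Function.Bijective ψ := by
  have hψr : ∀ r : R, ψ (r • m) = Ideal.Quotient.mk I r := fun r => by
    rw [map_smul, hψ, Algebra.smul_def, mul_one, Ideal.Quotient.algebraMap_eq]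
  refine ⟨(injective_iff_map_eq_zero ψ).2 fun x hx => ?_, fun y => ?_⟩
  · obtain ⟨r, rfl⟩ := Submodule.mem_span_singleton.1 (hm ▸ Submodule.mem_top : x ∈ _)
    rw [hψr] at hx
    exact hI r (Ideal.Quotient.eq_zero_iff_mem.1 hx)
  · obtain ⟨r, rfl⟩ := Ideal.Quotient.mk_surjective y
    exact ⟨r • m, hψr r⟩

theorem aeval_cyclotomic_mul_cyclotomic_two_mul {A : Type*} [CommRing A] {p : ℕ} (hp : p.Prime)
    (hodd : Odd p) (x : A) :
    aeval x (cyclotomic p ℤ) * aeval x (cyclotomic (2 * p) ℤ) = ∑ i ∈ range p, (x ^ 2) ^ i := by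
  have : Fact p.Prime := ⟨hp⟩
  rw [mul_comm, mul_comm 2 p, ← map_mul, ← cyclotomic_expand_eq_cyclotomic_mul Nat.prime_two
    hodd.not_two_dvd_nat, expand_aeval, cyclotomic_prime, map_sum]
  simp only [map_pow, aeval_X]

theorem mem_powers_rho {p : ℕ} (hp : p ≠ 0) (g : cyc2p p) : g ∈ Submonoid.powers (rho p) := by
  have : NeZero (2 * p) := ⟨by omega⟩
  refine ⟨g.toAdd.val, ?_⟩
  change rho p ^ g.toAdd.val = g
  rw [rho, ← ofAdd_nsmul, nsmul_one, ZMod.natCast_zmod_val, ofAdd_toAdd]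

theorem rhoE_pow_two_mul (p : ℕ) : rhoE p ^ (2 * p) = 1 := by
  rw [rhoE, ← map_pow, rho, ← ofAdd_nsmul, nsmul_one, ZMod.natCast_self, ofAdd_zero, map_one]

theorem closure_rhoE_sq_rhoE_pow {p : ℕ} (hodd : Odd p) :
    Subring.closure {rhoE p ^ 2, rhoE p ^ p} = ⊤ := by
  obtain ⟨k, hk⟩ := hodd
  have hρ : rhoE p = rhoE p ^ p * (rhoE p ^ 2) ^ (k + 1) := by
    rw [← pow_mul, ← pow_add, show p + 2 * (k + 1) = 2 * p + 1 by omega, pow_succ,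
      rhoE_pow_two_mul, one_mul]
  set C := Subring.closure {rhoE p ^ 2, rhoE p ^ p}
  have hσ : rhoE p ^ 2 ∈ C := Subring.subset_closure (Set.mem_insert _ _)
  have hτ : rhoE p ^ p ∈ C := Subring.subset_closure (Set.mem_insert_of_mem _ rfl)
  refine eq_top_iff.2 <|
    (MonoidAlgebra.closure_singleton_of_eq_top (mem_powers_rho (by omega))).ge.trans <|
      Subring.closure_le.2 <| Set.singleton_subset_iff.2 ?_
  change rhoE p ∈ C
  rw [hρ]
  exact mul_mem hτ (pow_mem hσ _)

theorem pow_eq_one_of_geom_sum_eq_zero {R : Type*} [Ring R] {x : R} {n : ℕ}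
    (h : ∑ k ∈ range n, x ^ k = 0) : x ^ n = 1 := by
  have := geom_sum_mul x n
  rwa [h, zero_mul, eq_comm, sub_eq_zero] at this

section Lattice

variable {R M : Type*} [CommRing R] [AddCommGroup M] [Module R M] {n : ℕ} [NeZero n] {σ τ : R}

theorem smul_sub_sum_eq_zero {u w : Fin n → M} (hu : IsCompanionShift σ u)
    (hw : IsCompanionShift σ w) :
    ∀ r ∈ Ideal.span {∑ k ∈ range (n + 1), σ ^ k}, r • (u 0 - ∑ j, w j) = 0 := by
  intro r hr
  obtain ⟨a, rfl⟩ := Ideal.mem_span_singleton'.1 hr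
  rw [mul_smul, smul_sub, hu.geom_sum_smul, Finset.smul_sum,
    Finset.sum_eq_zero fun j _ => hw.geom_sum_smul j, sub_zero, smul_zero]

theorem span_singleton_sub_sum_eq_top {T : R}
    (hT : (1 + σ) * T = 1 + ∑ k ∈ range (n + 1), σ ^ k) (b : Module.Basis (Fin n ⊕ Fin n) ℤ M)
    (hσu : IsCompanionShift σ fun i => b (.inl i)) (hσw : IsCompanionShift σ fun i => b (.inr i))
    (hτw : τ • b (.inr 0) = b (.inr 0))
    (hτu : τ • b (.inl 0) = -b (.inl 0) + b (.inr 0) + ∑ j, b (.inr j)) :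
    Submodule.span R {b (.inl 0) - ∑ j, b (.inr j)} = ⊤ := by
  set u₀ := b (.inl 0)
  set w₀ := b (.inr 0)
  set W := ∑ j, b (.inr j)
  set P := Submodule.span R {u₀ - W}
  have hT_smul : ∀ x : M, (∑ k ∈ range (n + 1), σ ^ k) • x = 0 → ((1 + σ) * T) • x = x :=
    fun x hx => by rw [hT, add_smul, one_smul, hx, add_zero]
  have hNW : (∑ k ∈ range (n + 1), σ ^ k) • W = 0 := by
    rw [Finset.smul_sum]; exact Finset.sum_eq_zero fun j _ => hσw.geom_sum_smul j
  have hτW : τ • W = W := Finset.smul_sum.trans <| Finset.sum_congr rfl fun j _ => by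
    rw [hσw.smul_eq_pow_smul τ j, hτw, hσw.pow_smul_zero]
  have hτm : τ • (u₀ - W) = w₀ - u₀ := by rw [smul_sub, hτu, hτW]; abel
  have hu₀ : ((σ - τ) * T) • (u₀ - W) = u₀ := by
    have : (σ - τ) • (u₀ - W) = (1 + σ) • u₀ := by
      rw [sub_smul, hτm, smul_sub, hσw.smul_sum, add_smul, one_smul]; abel
    rw [mul_comm, mul_smul, this, ← mul_smul, mul_comm, hT_smul _ (hσu.geom_sum_smul 0)]
  have hw₀ : (σ * T * (1 + τ)) • (u₀ - W) = w₀ := by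
    have : (1 + τ) • (u₀ - W) = (1 + σ) • -W := by
      rw [add_smul, one_smul, hτm, add_smul, one_smul, smul_neg, hσw.smul_sum]; abel
    rw [mul_smul, this, ← mul_smul, mul_assoc, mul_comm T, mul_smul,
      hT_smul _ (by rw [smul_neg, hNW, neg_zero]), smul_neg, hσw.smul_sum, neg_neg]
  have hu₀P : u₀ ∈ P := hu₀ ▸ Submodule.smul_mem _ _ (Submodule.mem_span_singleton_self _)
  have hw₀P : w₀ ∈ P := hw₀ ▸ Submodule.smul_mem _ _ (Submodule.mem_span_singleton_self _)
  refine Submodule.eq_top_of_forall_basis_mem b (Sum.forall.2 ⟨fun i => ?_, fun i => ?_⟩)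
  · exact hσu.pow_smul_zero i ▸ Submodule.smul_mem _ _ hu₀P
  · exact hσw.pow_smul_zero i ▸ Submodule.smul_mem _ _ hw₀P

theorem exists_linearMap_quotient_map_eq_one {T : R} (hτ : τ ^ 2 = 1)
    (hgen : Subring.closure {σ, τ} = ⊤) (hT : (1 + σ) * T = 1 + ∑ k ∈ range (n + 1), σ ^ k)
    (b : Module.Basis (Fin n ⊕ Fin n) ℤ M)
    (hσu : IsCompanionShift σ fun i => b (.inl i)) (hσw : IsCompanionShift σ fun i => b (.inr i))
    (hτw : τ • b (.inr 0) = b (.inr 0))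
    (hτu : τ • b (.inl 0) = -b (.inl 0) + b (.inr 0) + ∑ j, b (.inr j)) :
    ∃ ψ : M →ₗ[R] R ⧸ Ideal.span {∑ k ∈ range (n + 1), σ ^ k},
      ψ (b (.inl 0) - ∑ j, b (.inr j)) = 1 := by
  set I := Ideal.span {∑ k ∈ range (n + 1), σ ^ k}
  set q := Ideal.Quotient.mk I
  have hsmul : ∀ (r : R) (x : R ⧸ I), r • x = q r * x := fun r x => by
    rw [Algebra.smul_def, Ideal.Quotient.algebraMap_eq]
  have hqN : q (∑ k ∈ range (n + 1), σ ^ k) = 0 :=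
    Ideal.Quotient.eq_zero_iff_mem.2 (Ideal.mem_span_singleton_self _)
  have hN : ∀ x : R ⧸ I, (∑ k ∈ range (n + 1), σ ^ k) • x = 0 := fun x => by
    rw [hsmul, hqN, zero_mul]
  have hσ' : q σ ^ (n + 1) = 1 := pow_eq_one_of_geom_sum_eq_zero (by simpa using hqN)
  have hτ' : q τ ^ 2 = 1 := by rw [← map_pow, hτ, map_one]
  have hT' : (1 + q σ) * q T = 1 := by simpa [hqN] using congrArg q hT
  set a := q ((σ - τ) * T)
  set c := q (σ * T * (1 + τ))
  set ψ : M →+ R ⧸ I :=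
    (b.constr ℤ (Sum.elim (fun i => σ ^ (i : ℕ) • a) fun i => σ ^ (i : ℕ) • c)).toAddMonoidHom
  have hψu : ∀ i, ψ (b (.inl i)) = σ ^ (i : ℕ) • a := fun i => b.constr_basis ℤ _ (.inl i)
  have hψw : ∀ i, ψ (b (.inr i)) = σ ^ (i : ℕ) • c := fun i => b.constr_basis ℤ _ (.inr i)
  have hψW : ψ (∑ j, b (.inr j)) = -(σ ^ n • c) := by
    rw [map_sum]; simp only [hψw]; exact sum_fin_pow_smul_eq_neg (hN c)
  have hσψ : σ ∈ ψ.smulCommSubring := ψ.mem_smulCommSubring_of_basis b <|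
    Sum.forall.2 ⟨hσu.map_smul ψ hψu (hN a), hσw.map_smul ψ hψw (hN c)⟩
  have hτψ : τ ∈ ψ.smulCommSubring := by
    refine ψ.mem_smulCommSubring_of_basis b (Sum.forall.2 ⟨hσu.map_smul_of_map_smul_zero hσψ ?_,
      hσw.map_smul_of_map_smul_zero hσψ ?_⟩)
    · rw [hτu, map_add, map_add, map_neg, hψu, hψw, hψW]
      simp only [hsmul, Fin.val_zero, pow_zero, map_one, one_mul, a, c, map_mul, map_sub, map_add,
        map_pow]
      linear_combination q T * hτ' - q T * (1 + q τ) * hσ'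
    · rw [hτw, hψw]
      simp only [hsmul, Fin.val_zero, pow_zero, map_one, one_mul, c, map_mul, map_add]
      linear_combination (-(q σ * q T)) * hτ'
  refine ⟨ψ.toLinearMapOfClosure hgen
    (Set.insert_subset_iff.2 ⟨hσψ, Set.singleton_subset_iff.2 hτψ⟩), ?_⟩
  change ψ (b (.inl 0) - ∑ j, b (.inr j)) = 1
  rw [map_sub, hψu, hψW]
  simp only [hsmul, Fin.val_zero, pow_zero, map_one, one_mul, a, c, map_mul, map_sub, map_add,
    map_pow]
  linear_combination q T * (1 + q τ) * hσ' + hT'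

end Lattice

theorem nonempty_linearEquiv_quotient_geom_sum {R M : Type*} [CommRing R] [AddCommGroup M]
    [Module R M] {n : ℕ} [NeZero n] (hn : Even n) {σ τ : R} (hσ : σ ^ (n + 1) = 1)
    (hτ : τ ^ 2 = 1) (hgen : Subring.closure {σ, τ} = ⊤) (b : Module.Basis (Fin n ⊕ Fin n) ℤ M)
    (hσu : IsCompanionShift σ fun i => b (.inl i)) (hσw : IsCompanionShift σ fun i => b (.inr i))
    (hτw : τ • b (.inr 0) = b (.inr 0))
    (hτu : τ • b (.inl 0) = -b (.inl 0) + b (.inr 0) + ∑ j, b (.inr j)) :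
    Nonempty (M ≃ₗ[R] R ⧸ Ideal.span {∑ k ∈ range (n + 1), σ ^ k}) := by
  obtain ⟨k, rfl⟩ := hn
  have hT : (1 + σ) * ∑ j ∈ range (k + 1), (σ ^ 2) ^ j = 1 + ∑ i ∈ range (k + k + 1), σ ^ i := by
    rw [← geom_sum_two_mul, show 2 * (k + 1) = k + k + 1 + 1 by ring, sum_range_succ, hσ,
      add_comm]
  obtain ⟨ψ, hψ⟩ := exists_linearMap_quotient_map_eq_one hτ hgen hT b hσu hσw hτw hτu
  exact ⟨.ofBijective ψ <| LinearMap.bijective_of_map_generator_eq_one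
    (span_singleton_sub_sum_eq_top hT b hσu hσw hτw hτu) (smul_sub_sum_eq_zero hσu hσw) ψ hψ⟩

/-- Let `π = ⟨ρ⟩` be cyclic of order `2p` (`p` an odd prime), `σ = ρ²`, `τ = ρ^p`.
Let `M` be a `ℤ[π]`-module which is free as an abelian group on
`u₁,…,u_{p-1}, w₁,…,w_{p-1}` (indexed here by `Fin (p-1) ⊕ Fin (p-1)`), with action:
`σ : uᵢ ↦ u_{i+1}` for `i < p-1`, `u_{p-1} ↦ -(u₁+⋯+u_{p-1})`, similarly on the `wᵢ`;
`τ : wᵢ ↦ wᵢ`, `uᵢ ↦ -uᵢ + wᵢ - w_{i-1}` where `w₀ := -(w₁+⋯+w_{p-1})`.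
Then `M ≅ ℤ[π]/⟨Φ_p(ρ)·Φ_{2p}(ρ)⟩` as `ℤ[π]`-modules. -/
theorem lattice_M_iso_quotient (p : ℕ) (hp : p.Prime) (hodd : Odd p)
    (M : Type*) [AddCommGroup M] [Module (grpRing p) M]
    (b : Module.Basis (Fin (p - 1) ⊕ Fin (p - 1)) ℤ M)
    -- `u i := b (.inl i)`, `w i := b (.inr i)`
    (hσu : ∀ i : Fin (p - 1), ((rhoE p) ^ 2) • b (.inl i) =
      if h : (i : ℕ) + 1 < p - 1 then b (.inl ⟨(i : ℕ) + 1, h⟩)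
      else -∑ j : Fin (p - 1), b (.inl j))
    (hσw : ∀ i : Fin (p - 1), ((rhoE p) ^ 2) • b (.inr i) =
      if h : (i : ℕ) + 1 < p - 1 then b (.inr ⟨(i : ℕ) + 1, h⟩)
      else -∑ j : Fin (p - 1), b (.inr j))
    (hτw : ∀ i : Fin (p - 1), ((rhoE p) ^ p) • b (.inr i) = b (.inr i))
    (hτu : ∀ i : Fin (p - 1), ((rhoE p) ^ p) • b (.inl i) =
      -b (.inl i) + b (.inr i) -
        (if (i : ℕ) = 0 then -∑ j : Fin (p - 1), b (.inr j)
         else b (.inr ⟨(i : ℕ) - 1, lt_of_le_of_lt (Nat.sub_le _ _) i.isLt⟩))) :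
    Nonempty (M ≃ₗ[grpRing p]
      (grpRing p ⧸ Ideal.span
        {aeval (rhoE p) (cyclotomic p ℤ) * aeval (rhoE p) (cyclotomic (2 * p) ℤ)})) := by
  have : NeZero (p - 1) := ⟨(Nat.sub_pos_of_lt hp.one_lt).ne'⟩
  have hp1 : p - 1 + 1 = p := Nat.sub_add_cancel hp.one_le
  have hτu₀ := hτu 0
  rw [if_pos (Fin.val_zero _), sub_neg_eq_add] at hτu₀
  have key := nonempty_linearEquiv_quotient_geom_sum (Nat.Odd.sub_odd hodd odd_one)
    (by rw [hp1, ← pow_mul, rhoE_pow_two_mul]) (by rw [← pow_mul, mul_comm p 2, rhoE_pow_two_mul])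
    (closure_rhoE_sq_rhoE_pow hodd) b hσu hσw (hτw 0) hτu₀
  rwa [hp1, ← aeval_cyclotomic_mul_cyclotomic_two_mul hp hodd] at key
end

section
/- Let G be a finite group acting faithfully on a field L, and extend the action to L(x₁,...,xₘ) so that each σ ∈ G maps the column vector (x₁,...,xₘ) to A(σ)(x₁,...,xₘ)ᵗ + B(σ) with A(σ) ∈ GL_m(L) and B(σ) an m×1 matrix over L. Then there exist z₁,...,zₘ ∈ L(x₁,...,xₘ), obtained from x₁,...,xₘ by an invertible affine change of variables over L, such that L(x₁,...,xₘ) = L(z₁,...,zₘ) and σ(zᵢ) = zᵢ for all σ ∈ G and all i. -/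
/-!
The `L`-span `V` of `1, x₁, …, xₘ` is `G`-stable, and `G` acts on it semilinearly over its action
on `L`. Since `G` acts faithfully on `L`, Dedekind's independence of characters shows that the
traces `∑ σ, σ (c • v)`, `c ∈ L`, span `v` over `L` (Speiser's lemma), so `V` is spanned by its
`G`-fixed vectors. Among the fixed affine forms pick `m` whose linear parts form a basis of `Lᵐ`;
they are the `zᵢ`, and the `xᵢ` are recovered from them by inverting the matrix of linear parts.
-/

open Submodule MvPolynomial

section Descent

variable {G L W : Type*} [Group G] [Fintype G] [Field L] [MulSemiringAction G L]
  [AddCommGroup W] [Module L W] [DistribMulAction G W]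

theorem smul_sum_smul_eq (h : G) (w : W) : h • ∑ g : G, g • w = ∑ g : G, g • w := by
  simp_rw [Finset.smul_sum, smul_smul]
  exact Fintype.sum_bijective (h * ·) (Group.mulLeft_bijective h) _ _ fun _ => rfl

theorem eq_zero_of_forall_sum_smul_mul_eq_zero [FaithfulSMul G L] {f : G → L}
    (hf : ∀ c : L, ∑ g : G, (g • c) * f g = 0) : f = 0 := by
  let χ : G → (L →* L) := fun g => (MulSemiringAction.toRingHom G L g : L →* L)
  have hχ : Function.Injective χ := fun g h hgh =>
    toRingHom_injective G L (RingHom.ext fun c => DFunLike.congr_fun hgh c)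
  have hli := (linearIndependent_monoidHom L L).comp χ hχ
  funext g
  refine Fintype.linearIndependent_iff.mp hli f (funext fun c => ?_) g
  simpa [χ, mul_comm] using hf c

variable [FaithfulSMul G L] [SMulDistribClass G L W]

theorem mem_span_range_sum_smul_smul (w : W) :
    w ∈ span L (Set.range fun c : L => ∑ g : G, g • c • w) := by
  by_contra hw
  obtain ⟨f, hfw, hf⟩ := exists_le_ker_of_notMem hw
  have hvanish : (fun g : G => f (g • w)) = 0 := by
    refine eq_zero_of_forall_sum_smul_mul_eq_zero fun c => ?_
    simpa [LinearMap.mem_ker, map_sum, smul_distrib_smul] using hf (subset_span ⟨c, rfl⟩)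
  exact hfw (by simpa using congr_fun hvanish 1)

theorem mem_span_inter_fixed_of_mem {V : Submodule L W} (hV : ∀ (g : G), ∀ w ∈ V, g • w ∈ V)
    {w : W} (hw : w ∈ V) : w ∈ span L (V ∩ {v | ∀ g : G, g • v = v}) := by
  refine span_mono ?_ (mem_span_range_sum_smul_smul (G := G) w)
  rintro _ ⟨c, rfl⟩
  exact ⟨sum_mem fun g _ => hV g _ (V.smul_mem c hw), fun h => smul_sum_smul_eq h _⟩

end Descent

theorem Matrix.exists_isUnit_det_of_le_span {K ι : Type*} [Field K] [Fintype ι] [DecidableEq ι]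
    {s : Set (ι → K)} (hs : ⊤ ≤ span K s) :
    ∃ A : Matrix ι ι K, (∀ i, A i ∈ s) ∧ IsUnit A.det := by
  let b := Module.Basis.ofSpan hs
  let r := b.reindex (b.indexEquiv (Pi.basisFun K ι))
  refine ⟨Matrix.of r, fun i => Module.Basis.ofSpan_subset hs ⟨_, (b.reindex_apply _ i).symm⟩, ?_⟩
  rw [← Matrix.isUnit_iff_isUnit_det, ← Matrix.linearIndependent_rows_iff_isUnit]
  exact r.linearIndependent

section Restriction

variable {G L F : Type*} [Group G] [Field L] [Field F] (φ : G →* RingAut F) (e : L →+* F)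
  (hL : ∀ (g : G) (a : L), ∃ b : L, φ g (e a) = e b)

noncomputable abbrev RingAut.restrictAction : MulSemiringAction G L :=
  let := MulSemiringAction.compHom F φ
  let : SMul G L := ⟨fun g a => (hL g a).choose⟩
  have he : ∀ (g : G) (a : L), e (g • a) = g • e a := fun g a => (hL g a).choose_spec.symm
  { e.injective.distribMulAction (e : L →+ F) he,
    e.injective.mulDistribMulAction (e : L →* F) he with }

theorem RingAut.map_restrictAction_smul (g : G) (a : L) :
    let := RingAut.restrictAction φ e hL
    e (g • a) = φ g (e a) :=
  (hL g a).choose_spec.symm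

theorem RingAut.faithfulSMul_restrictAction
    (hfaith : ∀ g : G, g ≠ 1 → ∃ a : L, φ g (e a) ≠ e a) :
    let := RingAut.restrictAction φ e hL
    FaithfulSMul G L := by
  intro _
  refine ⟨fun {g h} hgh => ?_⟩
  by_contra hne
  obtain ⟨a, ha⟩ := hfaith (h⁻¹ * g) (by rwa [ne_eq, inv_mul_eq_one, eq_comm])
  exact ha (by rw [← RingAut.map_restrictAction_smul φ e hL, mul_smul, hgh, inv_smul_smul])

theorem RingAut.smulDistribClass_restrictAction :
    let := RingAut.restrictAction φ e hL
    let := MulSemiringAction.compHom F φ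
    let := e.toAlgebra
    SMulDistribClass G L F := by
  intro _ _ _
  refine ⟨fun g c y => ?_⟩
  change φ g (e c * y) = e _ * φ g y
  rw [map_mul, RingAut.map_restrictAction_smul]

end Restriction

section AffineForm

variable {L F ι : Type*} [Field L] [Field F] [Fintype ι]

def affineForm (e : L →+* F) (x : ι → F) (a : ι → L) (b : L) : F := ∑ j, e (a j) * x j + e b

theorem exists_map_affineForm_eq (f : F →+* F) (e : L →+* F) (x : ι → F)
    (hL : ∀ a : L, ∃ b : L, f (e a) = e b) (hx : ∀ i, ∃ a b, f (x i) = affineForm e x a b)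
    (a : ι → L) (b : L) : ∃ a' b', f (affineForm e x a b) = affineForm e x a' b' := by
  choose A B hAB using hx
  choose ρ hρ using hL
  refine ⟨fun k => ∑ j, ρ (a j) * A j k, ∑ j, ρ (a j) * B j + ρ b, ?_⟩
  simp only [affineForm, map_add, map_sum, map_mul, hρ, hAB, mul_add, Finset.mul_sum,
    Finset.sum_mul, Finset.sum_add_distrib, mul_assoc, add_assoc]
  rw [Finset.sum_comm]

theorem single_mem_span_fixed_affineForm [DecidableEq ι] {G : Type*} [Group G] [Finite G]
    (φ : G →* RingAut F) (e : L →+* F) (x : ι → F)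
    (hx : Function.Injective fun w : (ι → L) × L => affineForm e x w.1 w.2)
    (hL : ∀ (g : G) (a : L), ∃ b : L, φ g (e a) = e b)
    (hfaith : ∀ g : G, g ≠ 1 → ∃ a : L, φ g (e a) ≠ e a)
    (haff : ∀ (g : G) (i : ι), ∃ a b, φ g (x i) = affineForm e x a b) (i : ι) :
    (Pi.single i 1, 0) ∈ span L
      {w : (ι → L) × L | ∀ g : G, φ g (affineForm e x w.1 w.2) = affineForm e x w.1 w.2} := by
  cases nonempty_fintype G
  let := RingAut.restrictAction φ e hL
  let := MulSemiringAction.compHom F φ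
  let := e.toAlgebra
  have := RingAut.faithfulSMul_restrictAction φ e hL hfaith
  have := RingAut.smulDistribClass_restrictAction φ e hL
  let Φ : (ι → L) × L →ₗ[L] F :=
    (Fintype.linearCombination L x).coprod (LinearMap.toSpanSingleton L F 1)
  have hΦ : ∀ w, Φ w = affineForm e x w.1 w.2 := fun w => by
    simp [Φ, affineForm, Fintype.linearCombination_apply, Algebra.smul_def,
      RingHom.algebraMap_toAlgebra]
  have hΦinj : Function.Injective Φ := fun u v h => hx (by simpa only [hΦ] using h)
  have hstable : ∀ (g : G), ∀ y ∈ LinearMap.range Φ, g • y ∈ LinearMap.range Φ := by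
    rintro g _ ⟨w, rfl⟩
    obtain ⟨a', b', h⟩ := exists_map_affineForm_eq (φ g : F →+* F) e x (hL g) (haff g) w.1 w.2
    exact ⟨(a', b'), by rw [hΦ, hΦ]; exact h.symm⟩
  have hxi := mem_span_inter_fixed_of_mem hstable (LinearMap.mem_range_self Φ (Pi.single i 1, 0))
  rw [LinearMap.coe_range, ← Set.image_preimage_eq_range_inter, span_image] at hxi
  obtain ⟨u, hu, hΦu⟩ := hxi
  rw [← hΦinj hΦu]
  simp only [← hΦ]
  exact hu

theorem exists_isUnit_det_forall_map_affineForm_eq [DecidableEq ι] {G : Type*} [Group G]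
    [Finite G] (φ : G →* RingAut F) (e : L →+* F) (x : ι → F)
    (hx : Function.Injective fun w : (ι → L) × L => affineForm e x w.1 w.2)
    (hL : ∀ (g : G) (a : L), ∃ b : L, φ g (e a) = e b)
    (hfaith : ∀ g : G, g ≠ 1 → ∃ a : L, φ g (e a) ≠ e a)
    (haff : ∀ (g : G) (i : ι), ∃ a b, φ g (x i) = affineForm e x a b) :
    ∃ (A : Matrix ι ι L) (B : ι → L), IsUnit A.det ∧
      ∀ (g : G) (i : ι), φ g (affineForm e x (A i) (B i)) = affineForm e x (A i) (B i) := by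
  set S := {w : (ι → L) × L | ∀ g : G, φ g (affineForm e x w.1 w.2) = affineForm e x w.1 w.2}
  have hspan : ⊤ ≤ span L (Prod.fst '' S) := by
    rw [← (Pi.basisFun L ι).span_eq, span_le]
    rintro _ ⟨i, rfl⟩
    have := mem_map_of_mem (f := LinearMap.fst L (ι → L) L)
      (single_mem_span_fixed_affineForm φ e x hx hL hfaith haff i)
    rw [← span_image] at this
    simpa using this
  obtain ⟨A, hAS, hA⟩ := Matrix.exists_isUnit_det_of_le_span hspan
  choose w hwS hwA using hAS
  exact ⟨A, fun i => (w i).2, hA, fun g i => hwA i ▸ hwS i g⟩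

theorem mem_closure_range_affineForm [DecidableEq ι] (e : L →+* F) (x : ι → F)
    {A : Matrix ι ι L} (hA : IsUnit A.det) (B : ι → L) (k : ι) :
    x k ∈ Subfield.closure (Set.range e ∪ Set.range fun i => affineForm e x (A i) (B i)) := by
  have hxk : x k = ∑ i, e (A⁻¹ k i) * (affineForm e x (A i) (B i) - e (B i)) :=
    calc x k = ∑ j, e ((A⁻¹ * A) k j) * x j := by
          simp [Matrix.nonsing_inv_mul _ hA, Matrix.one_apply]
      _ = ∑ i, e (A⁻¹ k i) * ∑ j, e (A i j) * x j := by
          simp only [Matrix.mul_apply, map_sum, map_mul, Finset.sum_mul, Finset.mul_sum,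
            mul_assoc]
          exact Finset.sum_comm
      _ = _ := by simp [affineForm]
  rw [hxk]
  refine sum_mem fun i _ => mul_mem ?_ (sub_mem ?_ ?_)
  · exact Subfield.subset_closure (Or.inl ⟨_, rfl⟩)
  · exact Subfield.subset_closure (Or.inr ⟨i, rfl⟩)
  · exact Subfield.subset_closure (Or.inl ⟨_, rfl⟩)

end AffineForm

section FractionRing

variable {L ι : Type*} [Field L]

theorem FractionRing.mvPolynomial_subfield_eq_top {K : Subfield (FractionRing (MvPolynomial ι L))}
    (hC : ∀ a : L, algebraMap _ _ (C a : MvPolynomial ι L) ∈ K)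
    (hX : ∀ i, algebraMap _ _ (X i : MvPolynomial ι L) ∈ K) : K = ⊤ := by
  rw [eq_top_iff, ← IsFractionRing.closure_range_algebraMap (MvPolynomial ι L),
    Subfield.closure_le]
  rintro _ ⟨p, rfl⟩
  induction p using MvPolynomial.induction_on with
  | C a => exact hC a
  | add p q hp hq => simpa using add_mem hp hq
  | mul_X p i hp => simpa using mul_mem hp (hX i)

theorem affineForm_algebraMap_X_injective [Fintype ι] [DecidableEq ι] :
    Function.Injective fun w : (ι → L) × L =>
      affineForm ((algebraMap (MvPolynomial ι L) (FractionRing (MvPolynomial ι L))).comp C)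
        (fun j => algebraMap _ _ (X j : MvPolynomial ι L)) w.1 w.2 := by
  intro w w' h
  have hp : ∑ j, C (w.1 j) * X j + C w.2 = ∑ j, C (w'.1 j) * X j + (C w'.2 : MvPolynomial ι L) :=
    IsFractionRing.injective (MvPolynomial ι L) (FractionRing (MvPolynomial ι L))
      (by simpa [affineForm] using h)
  refine Prod.ext (funext fun j => ?_) ?_
  · have h0 : (0 : ι →₀ ℕ) ≠ Finsupp.single j 1 := (Finsupp.single_ne_zero.mpr one_ne_zero).symm
    simpa [coeff_sum, coeff_X, Finsupp.single_eq_single_iff, h0] using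
      congr_arg (coeff (Finsupp.single j 1)) hp
  · simpa [coeff_sum, coeff_X] using congr_arg (coeff 0) hp

end FractionRing

/-- Hajja–Kang linearization (Theorem 1 of [HK2]): let a finite group `G` act by field
automorphisms on the rational function field `F = L(x₁,…,xₘ)` so that the action maps `L`
to itself, restricts faithfully to `L`, and is `L`-affine on the variables:
`σ(xᵢ) = Σⱼ A(σ)ᵢⱼ xⱼ + B(σ)ᵢ` with `A(σ) ∈ GLₘ(L)`. Then there is an invertible affine
change of variables `zᵢ = Σⱼ Aᵢⱼ xⱼ + Bᵢ` over `L` with `L(x₁,…,xₘ) = L(z₁,…,zₘ)` and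
`σ(zᵢ) = zᵢ` for all `σ ∈ G` and all `i`. -/
theorem hajja_kang_linearization
    (L : Type*) [Field L] (m : ℕ) (G : Type*) [Group G] [Finite G]
    (φ : G →* RingAut (FractionRing (MvPolynomial (Fin m) L)))
    (e : L →+* FractionRing (MvPolynomial (Fin m) L))
    (he : e = (algebraMap (MvPolynomial (Fin m) L)
      (FractionRing (MvPolynomial (Fin m) L))).comp MvPolynomial.C)
    -- the action maps `L` into itself
    (hL : ∀ (σ : G) (a : L), ∃ b : L, φ σ (e a) = e b)
    -- the restriction of the action to `L` is faithful
    (hfaith : ∀ σ : G, σ ≠ 1 → ∃ a : L, φ σ (e a) ≠ e a)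
    -- the action is affine on the variables, with invertible linear part over `L`
    (haff : ∀ σ : G, ∃ (A : Matrix (Fin m) (Fin m) L) (B : Fin m → L), IsUnit A.det ∧
      ∀ i : Fin m, φ σ (algebraMap (MvPolynomial (Fin m) L) _ (MvPolynomial.X i)) =
        ∑ j, e (A i j) * algebraMap (MvPolynomial (Fin m) L) _ (MvPolynomial.X j) + e (B i)) :
    ∃ (A : Matrix (Fin m) (Fin m) L) (B : Fin m → L), IsUnit A.det ∧
      (∀ (σ : G) (i : Fin m),
        φ σ (∑ j, e (A i j) * algebraMap (MvPolynomial (Fin m) L) _ (MvPolynomial.X j) + e (B i)) =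
          ∑ j, e (A i j) * algebraMap (MvPolynomial (Fin m) L) _ (MvPolynomial.X j) + e (B i)) ∧
      Subfield.closure (Set.range ⇑e ∪ Set.range (fun i : Fin m =>
        ∑ j, e (A i j) * algebraMap (MvPolynomial (Fin m) L) _ (MvPolynomial.X j) + e (B i))) = ⊤ := by
  subst he
  obtain ⟨A, B, hA, hfix⟩ := exists_isUnit_det_forall_map_affineForm_eq φ _ _
    affineForm_algebraMap_X_injective hL hfaith fun g i =>
      let ⟨A, B, _, h⟩ := haff g
      ⟨A i, B i, h i⟩
  refine ⟨A, B, hA, hfix, FractionRing.mvPolynomial_subfield_eq_top (fun a => ?_) fun i => ?_⟩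
  · exact Subfield.subset_closure (Or.inl ⟨a, rfl⟩)
  · exact mem_closure_range_affineForm _ _ hA B i
end
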